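/- Backward execution over-approximates the correct preimage: for a trace in which backward execution copies the precondition value at upward-exposed assignments and splits over all values at non-upward-exposed assignments, the state sequence of the correct (ground-truth) execution is contained, at every position, in the set of states produced by backward execution from the correct postcondition. -/

import Mathlib

structure Stmt (V D : Type) where
  lhs : V
  rhs : (V → D) → D

def exec {V D : Type} [DecidableEq V] (s : Stmt V D) (σ : V → D) : V → D :=
  Function.update σ s.lhs (s.rhs σ)

/-- Forward execution of the (correct) trace from the precondition. -/
def run {V D : Type} [DecidableEq V] (σ : V → D) (t : List (Stmt V D)) : V → D :=
  t.foldl (fun σ s => exec s σ) σ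

/-- One backward step for statement `s`, with `pfx` the statements preceding
`s` in the whole trace: if `s` is upward exposed (no preceding statement
assigns its left-hand side), the variable is set to its precondition value;
otherwise the state splits over all possible values of the variable. -/
def backStep {V D : Type} [DecidableEq V] (pre : V → D) (pfx : List (Stmt V D))
    (s : Stmt V D) (τ : V → D) : Set (V → D) :=
  if ∀ u ∈ pfx, u.lhs ≠ s.lhs then
    {Function.update τ s.lhs (pre s.lhs)}
  else
    {σ | ∃ d : D, σ = Function.update τ s.lhs d}

/-- Backward execution ∇ of a suffix (second argument, in program order),
processing statements from the last one backwards; `pfx` is the prefix of the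
trace preceding the suffix (used to decide upward exposure wrt the whole
trace). -/
def backRun {V D : Type} [DecidableEq V] (pre : V → D) :
    List (Stmt V D) → List (Stmt V D) → (V → D) → Set (V → D)
  | _, [], σ => {σ}
  | pfx, s :: rest, σ =>
    ⋃ τ ∈ backRun pre (pfx ++ [s]) rest σ, backStep pre pfx s τ

/-! Backward execution of a suffix from the true final state can always follow the forward run in
reverse: at each statement the backward step retreats from `exec s σ` to `σ` itself, either by
splitting over the value of the assigned variable, or, at an upward-exposed statement, because no
earlier statement has assigned that variable, so `σ` still holds its precondition value there. -/

section Trace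

variable {V D : Type} [DecidableEq V]

theorem run_append (σ : V → D) (l₁ l₂ : List (Stmt V D)) :
    run σ (l₁ ++ l₂) = run (run σ l₁) l₂ :=
  List.foldl_append

theorem run_concat (σ : V → D) (l : List (Stmt V D)) (s : Stmt V D) :
    run σ (l ++ [s]) = exec s (run σ l) := by
  rw [run_append]
  rfl

theorem run_apply_of_forall_lhs_ne {v : V} :
    ∀ (l : List (Stmt V D)) (σ : V → D), (∀ u ∈ l, u.lhs ≠ v) → run σ l v = σ v
  | [], _, _ => rfl
  | s :: l, σ, h => by
    rw [List.forall_mem_cons] at h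
    change run (exec s σ) l v = σ v
    rw [run_apply_of_forall_lhs_ne l _ h.2, exec, Function.update_of_ne h.1.symm]

theorem mem_backStep_exec (pre : V → D) (pfx : List (Stmt V D)) (s : Stmt V D) (σ : V → D)
    (h : (∀ u ∈ pfx, u.lhs ≠ s.lhs) → σ s.lhs = pre s.lhs) :
    σ ∈ backStep pre pfx s (exec s σ) := by
  unfold backStep exec
  split_ifs with hexposed
  · rw [Set.mem_singleton_iff, Function.update_idem, ← h hexposed, Function.update_eq_self]
  · exact ⟨σ s.lhs, by rw [Function.update_idem, Function.update_eq_self]⟩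

theorem run_mem_backRun (pre : V → D) :
    ∀ (sfx pfx : List (Stmt V D)), run pre pfx ∈ backRun pre pfx sfx (run pre (pfx ++ sfx))
  | [], pfx => by rw [List.append_nil]; rfl
  | s :: sfx, pfx => by
    refine Set.mem_biUnion (x := run pre (pfx ++ [s])) ?_ ?_
    · simpa using run_mem_backRun pre sfx (pfx ++ [s])
    · rw [run_concat]
      exact mem_backStep_exec pre pfx s _ (run_apply_of_forall_lhs_ne pfx pre)

end Trace

/-- backward execution over-approximates the correct preimage:
for every position i, the state ω_i of the correct forward execution is among
the states produced by backward-executing the suffix s_{i+1},…,s_n from the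
correct postcondition ω_post = ω_n. -/
theorem backward_overapproximates {V D : Type} [DecidableEq V]
    (t : List (Stmt V D)) (pre : V → D) :
    ∀ i ≤ t.length,
      run pre (t.take i) ∈ backRun pre (t.take i) (t.drop i) (run pre t) := by
  intro i _
  simpa using run_mem_backRun pre (t.drop i) (t.take i)
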